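/- Assume the payoff parameters satisfy p1 > p3 > p4 > p2 and p1 + p2 > 2·p3 (stag hunt conditions). Let Q = {(i,j), (i+1,j), (i,j+1), (i+1,j+1)} ⊆ V be a square of four nodes on the toroidal grid G_{N,M} (N, M ≥ 3), and let S be a configuration with S(v) = C for all v ∈ Q. Then every configuration S' ∈ R(S) satisfies S'(v) = C for all v ∈ Q; i.e., the all-cooperation square is invariant under one step of the imitation dynamics regardless of the random or controlled neighbor choices. -/
import Mathlib


open MeasureTheory

namespace EvolGame

/-- A strategy: cooperation `C` or defection `D`. -/
inductive Strat : Type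
  | C : Strat
  | D : Strat
  deriving DecidableEq

/-- Node set of the toroidal grid `G_{N,M}`. -/
abbrev Node (N M : ℕ) := ZMod N × ZMod M

/-- A strategy configuration. -/
abbrev Config (N M : ℕ) := Node N M → Strat

/-- Adjacency on the toroidal grid. -/
def adj {N M : ℕ} (u v : Node N M) : Prop :=
  u - v = (1, 0) ∨ u - v = (-1, 0) ∨ u - v = (0, 1) ∨ u - v = (0, -1)

/-- The (at most four) neighbors of a node. -/
def neighbors {N M : ℕ} (v : Node N M) : Finset (Node N M) :=
  {v + (1, 0), v + (-1, 0), v + (0, 1), v + (0, -1)}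

/-- Number of cooperating neighbors of `v` under configuration `S`. -/
def coopCount {N M : ℕ} (S : Config N M) (v : Node N M) : ℕ :=
  ((neighbors v).filter (fun u => S u = Strat.C)).card

/-- Payoff of node `v` under configuration `S` with payoff parameters `p1,p2,p3,p4`. -/
def payoff (p1 p2 p3 p4 : ℝ) {N M : ℕ} (S : Config N M) (v : Node N M) : ℝ :=
  if S v = Strat.C then
    (coopCount S v : ℝ) * p1 + (4 - (coopCount S v : ℝ)) * p2
  else
    (coopCount S v : ℝ) * p3 + (4 - (coopCount S v : ℝ)) * p4

/-- A control assigns to each node one of its neighbors. -/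
def IsControl {N M : ℕ} (c : Node N M → Node N M) : Prop :=
  ∀ v, adj (c v) v

open Classical in
/-- The controlled update `F(S,c)`. -/
noncomputable def F (p1 p2 p3 p4 : ℝ) {N M : ℕ} (S : Config N M)
    (c : Node N M → Node N M) : Config N M :=
  fun v =>
    if payoff p1 p2 p3 p4 S v < payoff p1 p2 p3 p4 S (c v) then S (c v) else S v

/-- The set `R(S)` of configurations reachable from `S` in one imitation step. -/
def Rset (p1 p2 p3 p4 : ℝ) {N M : ℕ} (S : Config N M) : Set (Config N M) :=
  {S' | ∀ v, S' v = S v ∨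
    ∃ u, adj u v ∧ S' v = S u ∧ payoff p1 p2 p3 p4 S v < payoff p1 p2 p3 p4 S u}

/-- `Ω*`: adjacent nodes with different strategies have equal payoffs. -/
def OmegaStar (p1 p2 p3 p4 : ℝ) (N M : ℕ) : Set (Config N M) :=
  {S | ∀ u v, adj u v → S u ≠ S v →
    payoff p1 p2 p3 p4 S u = payoff p1 p2 p3 p4 S v}

/-- Controlled trajectory of the CEG. -/
noncomputable def traj (p1 p2 p3 p4 : ℝ) {N M : ℕ} (S0 : Config N M)
    (c : ℕ → Node N M → Node N M) : ℕ → Config N M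
  | 0 => S0
  | t + 1 => F p1 p2 p3 p4 (traj p1 p2 p3 p4 S0 c t) (c t)

/-- `A` is reachable from `S0` under the CEG within `T` steps. -/
def ReachableWithin (p1 p2 p3 p4 : ℝ) {N M : ℕ} (A : Set (Config N M))
    (S0 : Config N M) (T : ℕ) : Prop :=
  ∃ t ≤ T, ∃ c : ℕ → Node N M → Node N M,
    (∀ s, IsControl (c s)) ∧ traj p1 p2 p3 p4 S0 c t ∈ A

/-- The discrete σ-algebra on the finite configuration space. -/
instance {N M : ℕ} : MeasurableSpace (Config N M) := ⊤

/-- `μ` is the law of the time-homogeneous Markov chain with kernel `κ` started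
at `S0`, characterized by its finite-dimensional (cylinder) distributions. -/
def IsChainLaw {N M : ℕ} (κ : Config N M → PMF (Config N M)) (S0 : Config N M)
    (μ : Measure (ℕ → Config N M)) : Prop :=
  IsProbabilityMeasure μ ∧
  ∀ (t : ℕ) (s : ℕ → Config N M), s 0 = S0 →
    μ {ω | ∀ i ≤ t, ω i = s i} = ∏ i ∈ Finset.range t, κ (s i) (s (i + 1))

/-- An admissible imitation kernel with margin `ε`. -/
def IsAdmissible (p1 p2 p3 p4 : ℝ) {N M : ℕ} (ε : ℝ)
    (κ : Config N M → PMF (Config N M)) : Prop :=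
  (∀ (S : Config N M) (c : Node N M → Node N M), IsControl c →
      ENNReal.ofReal ε ≤ κ S (F p1 p2 p3 p4 S c)) ∧
  (∀ S : Config N M, ∑' S' : Rset p1 p2 p3 p4 S, κ S (S' : Config N M) = 1)

open Classical in
/-- The `W`-frozen controlled update. -/
noncomputable def FW (p1 p2 p3 p4 : ℝ) {N M : ℕ} (W : Set (Node N M))
    (S : Config N M) (c : Node N M → Node N M) : Config N M :=
  fun v => if v ∈ W then S v else F p1 p2 p3 p4 S c v

/-- The `W`-frozen one-step reach set `R_W(S)`. -/
def RsetW (p1 p2 p3 p4 : ℝ) {N M : ℕ} (W : Set (Node N M)) (S : Config N M) :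
    Set (Config N M) :=
  {S' | (∀ v ∈ W, S' v = S v) ∧
    ∀ v ∉ W, S' v = S v ∨
      ∃ u, adj u v ∧ S' v = S u ∧ payoff p1 p2 p3 p4 S v < payoff p1 p2 p3 p4 S u}

/-- Controlled trajectory of the `W`-frozen CEG. -/
noncomputable def trajW (p1 p2 p3 p4 : ℝ) {N M : ℕ} (W : Set (Node N M))
    (S0 : Config N M) (c : ℕ → Node N M → Node N M) : ℕ → Config N M
  | 0 => S0
  | t + 1 => FW p1 p2 p3 p4 W (trajW p1 p2 p3 p4 W S0 c t) (c t)

/-- `A` is reachable from `S0` under the `W`-frozen CEG within `T` steps. -/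
def ReachableWithinW (p1 p2 p3 p4 : ℝ) {N M : ℕ} (W : Set (Node N M))
    (A : Set (Config N M)) (S0 : Config N M) (T : ℕ) : Prop :=
  ∃ t ≤ T, ∃ c : ℕ → Node N M → Node N M,
    (∀ s, IsControl (c s)) ∧ trajW p1 p2 p3 p4 W S0 c t ∈ A

/-- A `W`-frozen admissible imitation kernel with margin `ε`. -/
def IsAdmissibleW (p1 p2 p3 p4 : ℝ) {N M : ℕ} (W : Set (Node N M)) (ε : ℝ)
    (κ : Config N M → PMF (Config N M)) : Prop :=
  (∀ (S : Config N M) (c : Node N M → Node N M), IsControl c →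
      ENNReal.ofReal ε ≤ κ S (FW p1 p2 p3 p4 W S c)) ∧
  (∀ S : Config N M, ∑' S' : RsetW p1 p2 p3 p4 W S, κ S (S' : Config N M) = 1)


lemma coopCount_le_four {N M : ℕ} (S : Config N M) (v : Node N M) :
    coopCount S v ≤ 4 := by
  classical
  refine (Finset.card_filter_le (neighbors v) _).trans ?_
  unfold neighbors
  refine (Finset.card_insert_le _ _).trans (Nat.succ_le_succ ?_)
  refine (Finset.card_insert_le _ _).trans (Nat.succ_le_succ ?_)
  refine (Finset.card_insert_le _ _).trans (Nat.succ_le_succ ?_)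
  simp

lemma two_le_coopCount {N M : ℕ} (S : Config N M) (w a b : Node N M)
    (ha : a ∈ neighbors w) (hb : b ∈ neighbors w) (hab : a ≠ b)
    (hSa : S a = Strat.C) (hSb : S b = Strat.C) : 2 ≤ coopCount S w := by
  classical
  have hsub : ({a, b} : Finset (Node N M)) ⊆
      (neighbors w).filter (fun u => S u = Strat.C) := by
    intro x hx
    simp only [Finset.mem_insert, Finset.mem_singleton] at hx
    rcases hx with rfl | rfl <;> simp [Finset.mem_filter, ha, hb, hSa, hSb]
  have := Finset.card_le_card hsub
  rwa [Finset.card_pair hab] at this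

lemma payoff_D_lt_C {N M : ℕ} (p1 p2 p3 p4 : ℝ) (h13 : p1 > p3) (h34 : p3 > p4)
    (h42 : p4 > p2) (hsum : p1 + p2 > 2 * p3) (S : Config N M) (w u : Node N M)
    (hw : S w = Strat.C) (hu : S u = Strat.D) (h2 : 2 ≤ coopCount S w) :
    payoff p1 p2 p3 p4 S u < payoff p1 p2 p3 p4 S w := by
  have hk4 : coopCount S w ≤ 4 := coopCount_le_four S w
  have hk'4 : coopCount S u ≤ 4 := coopCount_le_four S u
  unfold payoff
  rw [hw, hu, if_pos rfl, if_neg (by simp : ¬ (Strat.D = Strat.C))]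
  have h2' : (2 : ℝ) ≤ (coopCount S w : ℝ) := by exact_mod_cast h2
  have hk4' : (coopCount S w : ℝ) ≤ 4 := by exact_mod_cast hk4
  have hk'4' : (coopCount S u : ℝ) ≤ 4 := by exact_mod_cast hk'4
  have hk'0 : (0 : ℝ) ≤ (coopCount S u : ℝ) := Nat.cast_nonneg _
  nlinarith [mul_nonneg (by linarith : (0:ℝ) ≤ (coopCount S w : ℝ) - 2)
      (by linarith : (0:ℝ) ≤ p1 - p2),
    mul_nonneg (by linarith : (0:ℝ) ≤ 4 - (coopCount S u : ℝ))
      (by linarith : (0:ℝ) ≤ p3 - p4)]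

lemma square_node_stays {N M : ℕ} (p1 p2 p3 p4 : ℝ) (h13 : p1 > p3)
    (h34 : p3 > p4) (h42 : p4 > p2) (hsum : p1 + p2 > 2 * p3)
    (S S' : Config N M) (hS' : S' ∈ Rset p1 p2 p3 p4 S) (w a b : Node N M)
    (ha : a ∈ neighbors w) (hb : b ∈ neighbors w) (hab : a ≠ b)
    (hSw : S w = Strat.C) (hSa : S a = Strat.C) (hSb : S b = Strat.C) :
    S' w = Strat.C := by
  rcases hS' w with h | ⟨u, _, heq, hlt⟩
  · rw [h, hSw]
  · cases hu : S u with
    | C => rw [heq, hu]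
    | D =>
      exfalso
      have h2 := two_le_coopCount S w a b ha hb hab hSa hSb
      exact absurd hlt (not_lt.2
        (payoff_D_lt_C p1 p2 p3 p4 h13 h34 h42 hsum S w u hSw hu h2).le)

/-- under the stag hunt conditions, an all-cooperation square is
invariant under one step of the imitation dynamics. -/
theorem staghunt_square_invariant {N M : ℕ} (hN : 3 ≤ N) (hM : 3 ≤ M)
    (p1 p2 p3 p4 : ℝ) (h13 : p1 > p3) (h34 : p3 > p4) (h42 : p4 > p2)
    (hsum : p1 + p2 > 2 * p3)
    (v : Node N M) (S : Config N M)
    (hsq : S v = Strat.C ∧ S (v + (1, 0)) = Strat.C ∧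
      S (v + (0, 1)) = Strat.C ∧ S (v + (1, 1)) = Strat.C)
    (S' : Config N M) (hS' : S' ∈ Rset p1 p2 p3 p4 S) :
    S' v = Strat.C ∧ S' (v + (1, 0)) = Strat.C ∧
      S' (v + (0, 1)) = Strat.C ∧ S' (v + (1, 1)) = Strat.C := by
  obtain ⟨h00, h10, h01, h11⟩ := hsq
  haveI : Fact (1 < N) := ⟨by omega⟩
  haveI : Fact (1 < M) := ⟨by omega⟩
  have honeN : (1 : ZMod N) ≠ 0 := one_ne_zero
  have honeM : (1 : ZMod M) ≠ 0 := one_ne_zero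
  refine ⟨?_, ?_, ?_, ?_⟩
  · exact square_node_stays p1 p2 p3 p4 h13 h34 h42 hsum S S' hS'
      v (v + (1,0)) (v + (0,1))
      (by simp [neighbors]) (by simp [neighbors])
      (by simp [Prod.ext_iff, honeN]) h00 h10 h01
  · exact square_node_stays p1 p2 p3 p4 h13 h34 h42 hsum S S' hS'
      (v + (1,0)) v (v + (1,1))
      (by simp [neighbors, Prod.ext_iff, add_assoc])
      (by simp [neighbors, Prod.ext_iff, add_assoc])
      (by simp [Prod.ext_iff, honeM]) h10 h00 h11
  · exact square_node_stays p1 p2 p3 p4 h13 h34 h42 hsum S S' hS'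
      (v + (0,1)) v (v + (1,1))
      (by simp [neighbors, Prod.ext_iff, add_assoc])
      (by simp [neighbors, Prod.ext_iff, add_assoc])
      (by simp [Prod.ext_iff, honeN]) h01 h00 h11
  · exact square_node_stays p1 p2 p3 p4 h13 h34 h42 hsum S S' hS'
      (v + (1,1)) (v + (0,1)) (v + (1,0))
      (by simp [neighbors, Prod.ext_iff, add_assoc])
      (by simp [neighbors, Prod.ext_iff, add_assoc])
      (by simp [Prod.ext_iff, honeN]) h11 h01 h10

end EvolGame
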